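/- arXiv:0908.4054 — 3 statements merged into one kernel-verified Lean document; each statement's English description precedes it below -/
import Mathlib

section
/- The left ideal U(𝔫̄)𝔫̄₊ of U(𝔫̄) generated by 𝔫̄₊ = 𝔫 ⊗ ℂ[t] equals Σ_{j=1}^l Σ_{m≥0} U(𝔫̄) x_{α_j}(m), the left ideal generated by the nonnegative modes of the simple root vectors. In particular, for every positive root β and every m ≥ 0, the element x_β(m) of U(𝔫̄) is a linear combination of monomials x_{α_{r_1}}(m₁) ⋯ x_{α_{r_k}}(m_k) in simple-root modes whose last exponent satisfies m_k ≥ 0. -/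
/-- The data of a finite-dimensional complex simple Lie algebra `𝔤` of type `A`, `D` or `E`
of rank `l`, recorded through: its Cartan matrix `M`; its set `Δ` of positive roots, each
written via its coordinates in the basis of simple roots (so the `i`-th simple root is
`Pi.single i 1`); and the affinization `𝔫̄ = 𝔫 ⊗ ℂ[t,t⁻¹]` of the nilpotent subalgebra
`𝔫 = ⊕_{α ∈ Δ} ℂx_α`, where `x α m` stands for `x_α ⊗ t^m`.  The weight lattice `P` is
identified with `ℤ^l` via `λ ↦ (⟨λ, α_j⟩)_j`, so that `⟨λ, α⟩ = ∑_j ⟨λ, α_j⟩ α^j` for a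
positive root `α` with simple-root coordinates `α^j`; in particular `⟨λ_i, α⟩ = α^i` and
`⟨α_i, α⟩ = ∑_j m_{ij} α^j`. -/
structure ADEContext where
  /-- the rank -/
  l : ℕ
  hl : 0 < l
  /-- the Cartan matrix -/
  M : Matrix (Fin l) (Fin l) ℤ
  M_symm : M.IsSymm
  M_diag : ∀ i, M i i = 2
  M_offdiag : ∀ i j, i ≠ j → M i j = 0 ∨ M i j = -1
  M_posdef : (M.map ((↑) : ℤ → ℝ)).PosDef
  /-- the set of positive roots, in simple-root coordinates -/
  Δ : Finset (Fin l → ℤ)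
  Δ_nonneg : ∀ α ∈ Δ, ∀ j, 0 ≤ α j
  Δ_ne_zero : ∀ α ∈ Δ, α ≠ 0
  simple_mem : ∀ i : Fin l, (Pi.single i 1 : Fin l → ℤ) ∈ Δ
  /-- every nonsimple positive root is a positive root plus a simple root -/
  Δ_decomp : ∀ α ∈ Δ, (∀ i : Fin l, α ≠ Pi.single i 1) →
    ∃ β ∈ Δ, ∃ i : Fin l, α = β + Pi.single i 1
  /-- `α_i + α_j` is a root iff `i ≠ j` and `m_{ij} = -1` (simply-laced types) -/
  sum_simple_mem_iff : ∀ i j : Fin l,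
    ((Pi.single i 1 + Pi.single j 1 : Fin l → ℤ) ∈ Δ) ↔ (i ≠ j ∧ M i j = -1)
  /-- `2α_i + α_j` is never a root (simply-laced types) -/
  two_simple_add_not_mem : ∀ i j : Fin l,
    ((2 : ℤ) • (Pi.single i 1 : Fin l → ℤ) + Pi.single j 1) ∉ Δ
  /-- the underlying type of the affinization `𝔫̄ = 𝔫 ⊗ ℂ[t,t⁻¹]` -/
  nbar : Type
  [instLieRing : LieRing nbar]
  [instLieAlgebra : LieAlgebra ℂ nbar]
  /-- `x α m` is the element `x_α ⊗ t^m` of `𝔫̄` -/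
  x : (Fin l → ℤ) → ℤ → nbar
  /-- the elements `x_α ⊗ t^m`, `α ∈ Δ`, `m ∈ ℤ`, form a `ℂ`-basis of `𝔫̄` -/
  basis : Module.Basis ({α // α ∈ Δ} × ℤ) ℂ nbar
  basis_eq : ∀ (α : {α // α ∈ Δ}) (m : ℤ), basis (α, m) = x α.1 m
  /-- the structure constants: `[x_α, x_β] = C_{α,β} x_{α+β}` -/
  C : (Fin l → ℤ) → (Fin l → ℤ) → ℂ
  C_ne_zero : ∀ α ∈ Δ, ∀ β ∈ Δ, α + β ∈ Δ → C α β ≠ 0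
  /-- the bracket `[x ⊗ t^m, y ⊗ t^n] = [x,y] ⊗ t^{m+n}` on `𝔫̄` -/
  bracket_x : ∀ α ∈ Δ, ∀ β ∈ Δ, ∀ m n : ℤ,
    ⁅x α m, x β n⁆ = if α + β ∈ Δ then C α β • x (α + β) (m + n) else 0

attribute [instance] ADEContext.instLieRing ADEContext.instLieAlgebra

namespace ADEContext

variable (ctx : ADEContext)

/-- the universal enveloping algebra `U(𝔫̄)` -/
abbrev U : Type := UniversalEnvelopingAlgebra ℂ ctx.nbar

/-- the element `x_α(m) = x_α ⊗ t^m`, viewed in `U(𝔫̄)` -/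
noncomputable def X (α : Fin ctx.l → ℤ) (m : ℤ) : ctx.U :=
  UniversalEnvelopingAlgebra.ι ℂ (ctx.x α m)

/-- the `i`-th simple root `α_i`, in simple-root coordinates -/
def sroot (i : Fin ctx.l) : Fin ctx.l → ℤ := Pi.single i 1

/-- the left ideal `U(𝔫̄)𝔫̄₊` of `U(𝔫̄)` generated by `𝔫̄₊ = 𝔫 ⊗ ℂ[t]` (equivalently, by the
elements `x_α(m)`, `α ∈ Δ`, `m ≥ 0`, which span `𝔫̄₊`) -/
noncomputable def Uplus : Submodule ctx.U ctx.U :=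
  Submodule.span ctx.U {u | ∃ α ∈ ctx.Δ, ∃ m : ℤ, 0 ≤ m ∧ u = ctx.X α m}

/-- the truncated relation `R^j_{-1,t} = ∑_{m₁,m₂ ≤ -1, m₁+m₂=-t} x_{α_j}(m₁)x_{α_j}(m₂)` -/
noncomputable def R (j : Fin ctx.l) (t : ℤ) : ctx.U :=
  ∑ m ∈ Finset.Icc (1 - t) (-1 : ℤ), ctx.X (ctx.sroot j) m * ctx.X (ctx.sroot j) (-t - m)

/-- the left ideal `J` of `U(𝔫̄)` generated by the `R^j_{-1,t}`, `j = 1, …, l`, `t ≥ 2` -/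
noncomputable def Jideal : Submodule ctx.U ctx.U :=
  Submodule.span ctx.U {u | ∃ j : Fin ctx.l, ∃ t : ℤ, 2 ≤ t ∧ u = ctx.R j t}

/-- the left ideal `I_{λ_0} = J + U(𝔫̄)𝔫̄₊` -/
noncomputable def I0 : Submodule ctx.U ctx.U := ctx.Jideal ⊔ ctx.Uplus

/-- the left ideal `I_{λ_i} = I_{λ_0} + U(𝔫̄)x_{α_i}(-1)`, `i = 1, …, l` -/
noncomputable def Ii (i : Fin ctx.l) : Submodule ctx.U ctx.U :=
  ctx.I0 ⊔ Submodule.span ctx.U {ctx.X (ctx.sroot i) (-1)}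

/-- the value `ν(α) = ∏_j ν_j^{α^j}` on `α ∈ Q` of the character `ν : Q → ℂ^×` determined by
`ν(α_j) = ν_j = νu j` -/
def charVal (νu : Fin ctx.l → ℂˣ) (α : Fin ctx.l → ℤ) : ℂ :=
  (∏ j, (νu j) ^ (α j) : ℂˣ)

end ADEContext

/-
Every positive root `β` that is not simple is `γ + α_i` for a positive root `γ` of smaller
height, and then `x_β(m)` is a nonzero multiple of the commutator
`x_γ(0) x_{α_i}(m) - x_{α_i}(m) x_γ(0)`.  By induction on the height, `x_β(m)` with `m ≥ 0` is
therefore a combination of monomials in simple-root modes ending in a nonnegative mode `x_{α_j}(m)`,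
so it lies in the left ideal generated by the `x_{α_j}(m)`, `m ≥ 0`.
-/

namespace ADEContext

open Submodule

variable (ctx : ADEContext)

def simpleModeMonomials : Set ctx.U :=
  {u | ∃ L : List (Fin ctx.l × ℤ), ∃ j : Fin ctx.l, ∃ mk : ℤ, 0 ≤ mk ∧
    u = (L.map fun p => ctx.X (ctx.sroot p.1) p.2).prod * ctx.X (ctx.sroot j) mk}

def simpleModesNonneg : Set ctx.U :=
  {u | ∃ j : Fin ctx.l, ∃ m : ℤ, 0 ≤ m ∧ u = ctx.X (ctx.sroot j) m}

variable {ctx}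

theorem sum_add_sroot (γ : Fin ctx.l → ℤ) (i : Fin ctx.l) :
    ∑ j, (γ + ctx.sroot i) j = ∑ j, γ j + 1 := by
  simp [sroot, Finset.sum_add_distrib]

theorem X_mul_X_sub_X_mul_X {α β : Fin ctx.l → ℤ} (hα : α ∈ ctx.Δ) (hβ : β ∈ ctx.Δ)
    (hαβ : α + β ∈ ctx.Δ) (m n : ℤ) :
    ctx.X α m * ctx.X β n - ctx.X β n * ctx.X α m = ctx.C α β • ctx.X (α + β) (m + n) := by
  let _ := LieRing.ofAssociativeRing (A := ctx.U)
  have h := congrArg (UniversalEnvelopingAlgebra.ι ℂ) (ctx.bracket_x α hα β hβ m n)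
  rwa [if_pos hαβ, LieHom.map_lie, map_smul, Ring.lie_def] at h

theorem simple_mode_mul_mem {u : ctx.U} (hu : u ∈ span ℂ ctx.simpleModeMonomials)
    (i : Fin ctx.l) (m : ℤ) :
    ctx.X (ctx.sroot i) m * u ∈ span ℂ ctx.simpleModeMonomials := by
  induction hu using span_induction with
  | mem v hv =>
    obtain ⟨L, j, mk, hmk, rfl⟩ := hv
    exact subset_span ⟨(i, m) :: L, j, mk, hmk, by simp [mul_assoc]⟩
  | zero => simp
  | add a b _ _ ha hb => rw [mul_add]; exact add_mem ha hb
  | smul c a _ ha => rw [mul_smul_comm]; exact smul_mem _ _ ha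

theorem mul_simple_mode_mem {u : ctx.U} (hu : u ∈ span ℂ ctx.simpleModeMonomials)
    (i : Fin ctx.l) {m : ℤ} (hm : 0 ≤ m) :
    u * ctx.X (ctx.sroot i) m ∈ span ℂ ctx.simpleModeMonomials := by
  induction hu using span_induction with
  | mem v hv =>
    obtain ⟨L, j, mk, _, rfl⟩ := hv
    exact subset_span ⟨L ++ [(j, mk)], i, m, hm, by simp [mul_assoc]⟩
  | zero => simp
  | add a b _ _ ha hb => rw [add_mul]; exact add_mem ha hb
  | smul c a _ ha => rw [smul_mul_assoc]; exact smul_mem _ _ ha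

theorem X_mem_span_simpleModeMonomials {β : Fin ctx.l → ℤ} (hβ : β ∈ ctx.Δ) {m : ℤ}
    (hm : 0 ≤ m) : ctx.X β m ∈ span ℂ ctx.simpleModeMonomials := by
  by_cases hsimple : ∃ i, β = ctx.sroot i
  · obtain ⟨i, rfl⟩ := hsimple
    exact subset_span ⟨[], i, m, hm, by simp⟩
  · push Not at hsimple
    obtain ⟨γ, hγ, i, rfl⟩ : ∃ γ ∈ ctx.Δ, ∃ i, β = γ + ctx.sroot i :=
      ctx.Δ_decomp β hβ hsimple
    have hγ_mem : ctx.X γ 0 ∈ span ℂ ctx.simpleModeMonomials :=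
      X_mem_span_simpleModeMonomials hγ le_rfl
    have hC : ctx.C γ (ctx.sroot i) ≠ 0 := ctx.C_ne_zero γ hγ _ (ctx.simple_mem i) hβ
    have hcomm := X_mul_X_sub_X_mul_X (β := ctx.sroot i) hγ (ctx.simple_mem i) hβ 0 m
    rw [zero_add] at hcomm
    rw [← inv_smul_smul₀ hC (ctx.X _ m), ← hcomm]
    exact smul_mem _ _ (sub_mem (mul_simple_mode_mem hγ_mem i hm)
      (simple_mode_mul_mem hγ_mem i m))
termination_by (∑ j, β j).toNat
decreasing_by
  obtain rfl := ‹β = γ + ctx.sroot i›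
  have hγ_nonneg : 0 ≤ ∑ j, γ j := Finset.sum_nonneg fun j _ => ctx.Δ_nonneg γ hγ j
  rw [sum_add_sroot]
  omega

theorem span_simpleModeMonomials_le :
    span ℂ ctx.simpleModeMonomials ≤ (span ctx.U ctx.simpleModesNonneg).restrictScalars ℂ := by
  rw [span_le]
  rintro _ ⟨L, j, mk, hmk, rfl⟩
  exact smul_mem _ _ (subset_span (s := ctx.simpleModesNonneg) ⟨j, mk, hmk, rfl⟩)

end ADEContext

/-- The left ideal `U(𝔫̄)𝔫̄₊` of `U(𝔫̄)` generated by `𝔫̄₊ = 𝔫 ⊗ ℂ[t]` equals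
`Σ_{j=1}^l Σ_{m ≥ 0} U(𝔫̄)x_{α_j}(m)`, the left ideal generated by the nonnegative modes of
the simple root vectors.  In particular, for every positive root `β` and every `m ≥ 0`, the
element `x_β(m)` of `U(𝔫̄)` is a `ℂ`-linear combination of monomials
`x_{α_{r_1}}(m₁) ⋯ x_{α_{r_k}}(m_k)` in simple-root modes whose last exponent satisfies
`m_k ≥ 0`. -/
theorem left_ideal_nplus_eq_simple_modes (ctx : ADEContext) :
    ctx.Uplus = Submodule.span ctx.U
        {u | ∃ j : Fin ctx.l, ∃ m : ℤ, 0 ≤ m ∧ u = ctx.X (ctx.sroot j) m} ∧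
    ∀ β ∈ ctx.Δ, ∀ m : ℤ, 0 ≤ m →
      ctx.X β m ∈ Submodule.span ℂ
        {u | ∃ L : List (Fin ctx.l × ℤ), ∃ j : Fin ctx.l, ∃ mk : ℤ, 0 ≤ mk ∧
          u = (L.map fun p => ctx.X (ctx.sroot p.1) p.2).prod * ctx.X (ctx.sroot j) mk} := by
  refine ⟨le_antisymm ?_ ?_, fun β hβ m hm => ctx.X_mem_span_simpleModeMonomials hβ hm⟩
  · rw [ADEContext.Uplus, Submodule.span_le]
    rintro _ ⟨α, hα, m, hm, rfl⟩
    exact ctx.span_simpleModeMonomials_le (ctx.X_mem_span_simpleModeMonomials hα hm)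
  · rw [Submodule.span_le]
    rintro _ ⟨j, m, hm, rfl⟩
    exact Submodule.subset_span ⟨ctx.sroot j, ctx.simple_mem j, m, hm, rfl⟩
end

section
/- (Lemma 3.1) For every i = 1, …, l and every character ν : Q → ℂ^×, the automorphism τ_{λ_i,ν} of U(𝔫̄) maps I_{λ_0} into I_{λ_i}: τ_{λ_i,ν}(I_{λ_0}) ⊆ I_{λ_i}. -/
/-! `τ = τ_{λ_i,ν}` sends `x_α(m)` to a multiple of `x_α(m - α^i)`. For the generators `x_α(m)`,
`m ≥ 0`, of `U(𝔫̄)𝔫̄₊` it therefore suffices that `x_α(m) ∈ I_{λ_i}` as soon as `m ≥ -α^i`; this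
follows by induction on the height of `α`, writing `x_{β+α_j}(m)` as a multiple of the
commutator of `x_β(m + δ)` and `x_{α_j}(-δ)`, where `δ = α_j^i ∈ {0, 1}`.
For `j ≠ i`, `τ` only rescales `R^j_{-1,t}`. For `j = i` it turns `R^i_{-1,t}` into
`R^i_{-1,t+2}` minus its two boundary terms `x_{α_i}(-1)x_{α_i}(-t-1)` and
`x_{α_i}(-t-1)x_{α_i}(-1)`; as `2α_i` is not a root these are equal and lie in
`U(𝔫̄)x_{α_i}(-1)`. -/

namespace ADEContext

variable (ctx : ADEContext)

lemma X_commutator {α β : Fin ctx.l → ℤ} (hα : α ∈ ctx.Δ) (hβ : β ∈ ctx.Δ) (m n : ℤ) :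
    ctx.X α m * ctx.X β n - ctx.X β n * ctx.X α m =
      if α + β ∈ ctx.Δ then ctx.C α β • ctx.X (α + β) (m + n) else 0 := by
  let _ : LieRing ctx.U := LieRing.ofAssociativeRing
  rw [← Ring.lie_def, X, X, ← LieHom.map_lie, ctx.bracket_x α hα β hβ]
  split_ifs <;> simp [X]

lemma X_sroot_comm (j : Fin ctx.l) (a b : ℤ) :
    ctx.X (ctx.sroot j) a * ctx.X (ctx.sroot j) b =
      ctx.X (ctx.sroot j) b * ctx.X (ctx.sroot j) a := by
  have h := ctx.X_commutator (ctx.simple_mem j) (ctx.simple_mem j) a b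
  rwa [if_neg (by simp [ctx.sum_simple_mem_iff]), sub_eq_zero] at h

lemma X_add_mem {S : Submodule ctx.U ctx.U} {β γ : Fin ctx.l → ℤ} (hβ : β ∈ ctx.Δ)
    (hγ : γ ∈ ctx.Δ) (hβγ : β + γ ∈ ctx.Δ) {a b : ℤ} (ha : ctx.X β a ∈ S) (hb : ctx.X γ b ∈ S) :
    ctx.X (β + γ) (a + b) ∈ S := by
  have h := ctx.X_commutator hβ hγ a b
  rw [if_pos hβγ] at h
  rw [← inv_smul_smul₀ (ctx.C_ne_zero β hβ γ hγ hβγ) (ctx.X (β + γ) (a + b)), ← h]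
  exact Submodule.smul_of_tower_mem _ _
    (sub_mem (Ideal.mul_mem_left _ _ hb) (Ideal.mul_mem_left _ _ ha))

theorem root_induction {P : (Fin ctx.l → ℤ) → Prop} (simple : ∀ j, P (ctx.sroot j))
    (add_sroot : ∀ β ∈ ctx.Δ, ∀ j, β + ctx.sroot j ∈ ctx.Δ → P β → P (β + ctx.sroot j)) :
    ∀ α ∈ ctx.Δ, P α := by
  intro α hα
  induction hn : (∑ k, α k).toNat using Nat.strong_induction_on generalizing α with
  | _ n ih =>
  by_cases hs : ∃ j, α = ctx.sroot j
  · obtain ⟨j, rfl⟩ := hs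
    exact simple j
  · push Not at hs
    obtain ⟨β, hβ, j, rfl⟩ := ctx.Δ_decomp α hα hs
    refine add_sroot β hβ j hα (ih _ ?_ β hβ rfl)
    have hsum : ∑ k, (β + Pi.single j 1 : Fin ctx.l → ℤ) k = ∑ k, β k + 1 := by
      simp [Finset.sum_add_distrib]
    have hβ_nonneg : 0 ≤ ∑ k, β k := Finset.sum_nonneg fun k _ => ctx.Δ_nonneg β hβ k
    omega

variable {ctx} {i : Fin ctx.l}

lemma X_mem_Ii_of_nonneg {α : Fin ctx.l → ℤ} (hα : α ∈ ctx.Δ) {m : ℤ} (hm : 0 ≤ m) :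
    ctx.X α m ∈ ctx.Ii i :=
  Submodule.mem_sup_left (Submodule.mem_sup_right (Submodule.subset_span ⟨α, hα, m, hm, rfl⟩))

lemma X_sroot_neg_one_mem_Ii : ctx.X (ctx.sroot i) (-1) ∈ ctx.Ii i :=
  Submodule.mem_sup_right (Submodule.mem_span_singleton_self _)

lemma R_mem_Ii {j : Fin ctx.l} {t : ℤ} (ht : 2 ≤ t) : ctx.R j t ∈ ctx.Ii i :=
  Submodule.mem_sup_left (Submodule.mem_sup_left (Submodule.subset_span ⟨j, t, ht, rfl⟩))

lemma X_sroot_mem_Ii {j : Fin ctx.l} {m : ℤ} (hm : -ctx.sroot j i ≤ m) :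
    ctx.X (ctx.sroot j) m ∈ ctx.Ii i := by
  rcases le_or_gt 0 m with hm0 | hm0
  · exact X_mem_Ii_of_nonneg (ctx.simple_mem j) hm0
  · obtain rfl : j = i := by
      by_contra hji
      simp only [sroot, Pi.single_eq_of_ne (Ne.symm hji), neg_zero] at hm
      omega
    obtain rfl : m = -1 := by
      simp only [sroot, Pi.single_eq_same] at hm
      omega
    exact X_sroot_neg_one_mem_Ii

lemma X_mem_Ii {α : Fin ctx.l → ℤ} (hα : α ∈ ctx.Δ) {m : ℤ} (hm : -α i ≤ m) :
    ctx.X α m ∈ ctx.Ii i := by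
  refine ctx.root_induction (P := fun α => ∀ m, -α i ≤ m → ctx.X α m ∈ ctx.Ii i)
    (fun j m hm => X_sroot_mem_Ii hm) ?_ α hα m hm
  intro β hβ j hβj ih m hm
  rw [Pi.add_apply] at hm
  have h := ctx.X_add_mem hβ (ctx.simple_mem j) hβj (ih (m + ctx.sroot j i) (by omega))
    (X_sroot_mem_Ii (m := -ctx.sroot j i) le_rfl)
  rwa [add_neg_cancel_right] at h

lemma R_add_two (j : Fin ctx.l) {t : ℤ} (ht : 1 ≤ t) :
    ctx.R j (t + 2) =
      (∑ m ∈ Finset.Icc (1 - t) (-1 : ℤ),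
          ctx.X (ctx.sroot j) (m - 1) * ctx.X (ctx.sroot j) (-t - m - 1)) +
        2 • (ctx.X (ctx.sroot j) (-t - 1) * ctx.X (ctx.sroot j) (-1)) := by
  have hIcc : Finset.Icc (1 - (t + 2)) (-1 : ℤ) =
      insert (-1) (insert (-t - 1) ((Finset.Icc (1 - t) (-1)).map (addRightEmbedding (-1)))) := by
    ext m
    simp only [Finset.map_add_right_Icc, Finset.mem_Icc, Finset.mem_insert]
    omega
  rw [R, hIcc, Finset.sum_insert (by simp; omega), Finset.sum_insert (by simp),
    Finset.sum_map, ctx.X_sroot_comm j (-1)]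
  simp only [addRightEmbedding_apply, two_smul]
  ring_nf
  abel

variable {νu : Fin ctx.l → ℂˣ} {F : Type*} [FunLike F ctx.U ctx.U] [AlgHomClass F ℂ ctx.U ctx.U]
  {τ : F}

lemma map_R (hτ : ∀ α ∈ ctx.Δ, ∀ m : ℤ, τ (ctx.X α m) = ctx.charVal νu α • ctx.X α (m - α i))
    (j : Fin ctx.l) (t : ℤ) :
    τ (ctx.R j t) = ctx.charVal νu (ctx.sroot j) ^ 2 • ∑ m ∈ Finset.Icc (1 - t) (-1 : ℤ),
      ctx.X (ctx.sroot j) (m - ctx.sroot j i) * ctx.X (ctx.sroot j) (-t - m - ctx.sroot j i) := by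
  rw [R, map_sum, Finset.smul_sum]
  refine Finset.sum_congr rfl fun m _ => ?_
  rw [map_mul, hτ (ctx.sroot j) (ctx.simple_mem j), hτ (ctx.sroot j) (ctx.simple_mem j),
    smul_mul_smul_comm, sq]

lemma map_R_mem_Ii
    (hτ : ∀ α ∈ ctx.Δ, ∀ m : ℤ, τ (ctx.X α m) = ctx.charVal νu α • ctx.X α (m - α i))
    {j : Fin ctx.l} {t : ℤ} (ht : 2 ≤ t) : τ (ctx.R j t) ∈ ctx.Ii i := by
  rw [map_R hτ]
  refine Submodule.smul_of_tower_mem _ _ ?_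
  rcases eq_or_ne j i with rfl | hji
  · rw [show ctx.sroot j j = 1 from Pi.single_eq_same _ _,
      eq_sub_of_add_eq (ctx.R_add_two j (by omega : 1 ≤ t)).symm]
    exact sub_mem (R_mem_Ii (by omega))
      (Submodule.smul_of_tower_mem _ _ (Ideal.mul_mem_left _ _ X_sroot_neg_one_mem_Ii))
  · simp only [show ctx.sroot j i = 0 from Pi.single_eq_of_ne hji.symm _, sub_zero]
    exact R_mem_Ii ht

end ADEContext

/-- (Lemma 3.1)  For every `i = 1, …, l` and every character `ν : Q → ℂ^×` (determined by its
values `νu j = ν(α_j)`), the automorphism `τ_{λ_i,ν}` of `U(𝔫̄)` — i.e. the algebra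
automorphism acting on generators by `x_α(m) ↦ ν(α) x_α(m - ⟨λ_i, α⟩)`, where
`⟨λ_i, α⟩ = α^i` is the `i`-th simple-root coordinate of `α` — maps `I_{λ_0}` into
`I_{λ_i}`. -/
theorem tau_lambda_maps_I0_into_Ii (ctx : ADEContext) (i : Fin ctx.l)
    (νu : Fin ctx.l → ℂˣ) (τ : ctx.U ≃ₐ[ℂ] ctx.U)
    (hτ : ∀ α ∈ ctx.Δ, ∀ m : ℤ,
      τ (ctx.X α m) = ctx.charVal νu α • ctx.X α (m - α i)) :
    ∀ u ∈ ctx.I0, τ u ∈ ctx.Ii i := by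
  suffices ctx.I0 ≤ (ctx.Ii i).comap (τ : ctx.U →+* ctx.U).toSemilinearMap from
    fun u hu => this hu
  refine sup_le (Submodule.span_le.mpr ?_) (Submodule.span_le.mpr ?_)
  · rintro _ ⟨j, t, ht, rfl⟩
    exact ADEContext.map_R_mem_Ii hτ ht
  · rintro _ ⟨α, hα, m, hm, rfl⟩
    show τ (ctx.X α m) ∈ ctx.Ii i
    rw [hτ α hα m]
    exact Submodule.smul_of_tower_mem _ _ (ADEContext.X_mem_Ii hα (by omega))
end

section
/- For every i = 1, …, l and every character ν : Q → ℂ^×, σ_{ω_i,ν}(U(𝔫̄)𝔫̄₊) ⊆ I_{λ_0}; in particular, for every positive root β and every m ≥ 0, τ_{ω_i,ν}(x_β(m)) x_{α_i}(−1) ∈ I_{λ_0}. -/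
/-!
Write `⟨ω_i, β⟩ = ⟨α_i, β⟩ - β^i`. Since `τ` is multiplicative and `U(𝔫̄)𝔫̄₊` is the left ideal
spanned by the `x_β(m)`, `m ≥ 0`, it suffices that `x_β(m - ⟨ω_i, β⟩) x_{α_i}(-1) ∈ I_{λ_0}`.
Commuting the two factors produces `x_{α_i}(-1) x_β(m - ⟨ω_i, β⟩)` and a bracket term, both in
`U(𝔫̄)𝔫̄₊` as soon as the modes are nonnegative; this holds because `⟨α_i, β⟩ ≤ β^i` for
`β ≠ α_i`, and `⟨α_i, β⟩ = -1` when `β + α_i` is a root. The remaining case `β = α_i`, `m = 0`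
is the relation `R^i_{-1,2} = x_{α_i}(-1)²`.

Both facts about roots follow once every root has norm `(β, β) = 2` for the form `M`. This is
proved by induction on the height: positive-definiteness confines `⟨α_k, δ⟩` to `{-1, 0, 1}`,
and the unwanted values are excluded by Jacobi identities among the root vectors `x_θ(0)`, which
are nonzero since they belong to a basis.
-/

lemma Submodule.map_mul_mem_of_mem_span {A F : Type*} [Ring A] [FunLike F A A]
    [RingHomClass F A A] (f : F) {s : Set A} {I : Submodule A A} {a : A}
    (hs : ∀ g ∈ s, f g * a ∈ I) {u : A} (hu : u ∈ Submodule.span A s) : f u * a ∈ I := by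
  induction hu using Submodule.span_induction with
  | mem g hg => exact hs g hg
  | zero => simp
  | add u v _ _ hu hv => simpa [add_mul] using I.add_mem hu hv
  | smul b u _ hu => simpa [mul_assoc] using I.smul_mem (f b) hu

namespace ADEContext

open Matrix

variable {ctx : ADEContext}

section Form

variable (ctx) in
/-- `⟨α_k, v⟩` -/
def pair (k : Fin ctx.l) (v : Fin ctx.l → ℤ) : ℤ := (ctx.M *ᵥ v) k

variable (ctx) in
def normSq (v : Fin ctx.l → ℤ) : ℤ := v ⬝ᵥ ctx.M *ᵥ v

variable (ctx) in
def height (v : Fin ctx.l → ℤ) : ℤ := ∑ j, v j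

@[simp]
lemma pair_add (k : Fin ctx.l) (u v : Fin ctx.l → ℤ) :
    ctx.pair k (u + v) = ctx.pair k u + ctx.pair k v := by
  simp [pair, mulVec_add]

@[simp]
lemma pair_single (k j : Fin ctx.l) : ctx.pair k (Pi.single j 1) = ctx.M k j := by
  simp [pair]

@[simp]
lemma pair_sub (k : Fin ctx.l) (u v : Fin ctx.l → ℤ) :
    ctx.pair k (u - v) = ctx.pair k u - ctx.pair k v := by
  simp [pair, mulVec_sub]

lemma normSq_add_single (v : Fin ctx.l → ℤ) (k : Fin ctx.l) :
    ctx.normSq (v + Pi.single k 1) = ctx.normSq v + 2 * ctx.pair k v + 2 := by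
  have hsymm : v ⬝ᵥ ctx.M *ᵥ Pi.single k 1 = ctx.pair k v := by
    rw [dotProduct_mulVec, ← ctx.M_symm, vecMul_transpose, dotProduct_single_one]; rfl
  simp only [normSq, mulVec_add, dotProduct_add, add_dotProduct, hsymm, single_one_dotProduct]
  rw [mulVec_single_one, col_apply, ctx.M_diag]
  unfold pair; ring

lemma normSq_sub_single (v : Fin ctx.l → ℤ) (k : Fin ctx.l) :
    ctx.normSq (v - Pi.single k 1) = ctx.normSq v - 2 * ctx.pair k v + 2 := by
  have h := normSq_add_single (v - Pi.single k 1) k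
  rw [sub_add_cancel, pair_sub, pair_single, ctx.M_diag] at h
  linarith

lemma normSq_single (k : Fin ctx.l) : ctx.normSq (Pi.single k 1) = 2 := by
  rw [normSq, single_one_dotProduct, mulVec_single_one, col_apply, ctx.M_diag]

lemma normSq_pos {v : Fin ctx.l → ℤ} (hv : v ≠ 0) : 0 < ctx.normSq v := by
  let f := Int.castRingHom ℝ
  have hv' : f ∘ v ≠ 0 := fun h => hv (funext fun j => by simpa [f] using congrFun h j)
  have hcast : f (ctx.normSq v) = star (f ∘ v) ⬝ᵥ ctx.M.map f *ᵥ (f ∘ v) := by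
    rw [normSq, RingHom.map_dotProduct, star_trivial]
    congr 1
    funext j
    exact RingHom.map_mulVec f _ _ j
  have hpos : 0 < f (ctx.normSq v) := hcast ▸ ctx.M_posdef.dotProduct_mulVec_pos hv'
  simpa [f] using hpos

end Form

section Roots

@[simp]
lemma height_add_single (v : Fin ctx.l → ℤ) (k : Fin ctx.l) :
    ctx.height (v + Pi.single k 1) = ctx.height v + 1 := by
  simp [height, Finset.sum_add_distrib]

lemma one_le_height {β : Fin ctx.l → ℤ} (hβ : β ∈ ctx.Δ) : 1 ≤ ctx.height β := by
  obtain ⟨j, hj⟩ := Function.ne_iff.1 (ctx.Δ_ne_zero β hβ)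
  have hβj : 1 ≤ β j := lt_of_le_of_ne (ctx.Δ_nonneg β hβ j) (Ne.symm hj)
  exact hβj.trans (Finset.single_le_sum (fun j _ => ctx.Δ_nonneg β hβ j) (Finset.mem_univ j))

lemma eq_single_or_eq_add_single {β : Fin ctx.l → ℤ} (hβ : β ∈ ctx.Δ) :
    (∃ j, β = Pi.single j 1) ∨ ∃ δ ∈ ctx.Δ, ∃ m, β = δ + Pi.single m 1 := by
  by_cases hs : ∀ j : Fin ctx.l, β ≠ Pi.single j 1
  · exact Or.inr (ctx.Δ_decomp β hβ hs)
  · push Not at hs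
    exact Or.inl hs

lemma root_induction_s8 {p : ∀ β, β ∈ ctx.Δ → Prop}
    (single : ∀ j, p (Pi.single j 1) (ctx.simple_mem j))
    (add_single : ∀ δ hδ m (hδm : δ + Pi.single m 1 ∈ ctx.Δ), p δ hδ → p _ hδm)
    {β : Fin ctx.l → ℤ} (hβ : β ∈ ctx.Δ) : p β hβ := by
  suffices ∀ n : ℕ, ∀ β (hβ : β ∈ ctx.Δ), ctx.height β ≤ n → p β hβ from
    this _ β hβ (Int.self_le_toNat _)
  intro n
  induction n with
  | zero => intro β hβ h; push_cast at h; linarith [one_le_height hβ]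
  | succ n ih =>
    intro β hβ h
    rcases eq_single_or_eq_add_single hβ with ⟨j, rfl⟩ | ⟨δ, hδ, m, rfl⟩
    · exact single j
    · rw [height_add_single] at h
      exact add_single δ hδ m hβ (ih δ hδ (by push_cast at h; linarith))

lemma single_add_single_notMem (k : Fin ctx.l) :
    (Pi.single k 1 + Pi.single k 1 : Fin ctx.l → ℤ) ∉ ctx.Δ :=
  fun h => ((ctx.sum_simple_mem_iff k k).1 h).1 rfl

lemma single_add_two_single_notMem (j k : Fin ctx.l) :
    (Pi.single j 1 + Pi.single k 1 + Pi.single k 1 : Fin ctx.l → ℤ) ∉ ctx.Δ := by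
  have h := ctx.two_simple_add_not_mem k j
  rwa [two_smul, add_comm, ← add_assoc] at h

lemma single_add_single_notMem_of_M_eq_zero {j k : Fin ctx.l} (h : ctx.M j k = 0) :
    (Pi.single j 1 + Pi.single k 1 : Fin ctx.l → ℤ) ∉ ctx.Δ := by
  rw [ctx.sum_simple_mem_iff]
  omega

end Roots

section Brackets

lemma x_ne_zero {θ : Fin ctx.l → ℤ} (hθ : θ ∈ ctx.Δ) (m : ℤ) : ctx.x θ m ≠ 0 := by
  rw [← ctx.basis_eq ⟨θ, hθ⟩ m]
  exact ctx.basis.ne_zero _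

variable (ctx) in
def IsRootVector (θ : Fin ctx.l → ℤ) (u : ctx.nbar) : Prop :=
  θ ∈ ctx.Δ ∧ ∃ c : ℂ, c ≠ 0 ∧ u = c • ctx.x θ 0

lemma isRootVector_x {θ : Fin ctx.l → ℤ} (hθ : θ ∈ ctx.Δ) : ctx.IsRootVector θ (ctx.x θ 0) :=
  ⟨hθ, 1, one_ne_zero, (one_smul ℂ _).symm⟩

namespace IsRootVector

variable {α θ : Fin ctx.l → ℤ} {u v : ctx.nbar}

lemma ne_zero (hu : ctx.IsRootVector θ u) : u ≠ 0 := by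
  obtain ⟨hθ, c, hc, rfl⟩ := hu
  exact smul_ne_zero hc (x_ne_zero hθ 0)

lemma lie (hv : ctx.IsRootVector α v) (hu : ctx.IsRootVector θ u) (h : α + θ ∈ ctx.Δ) :
    ctx.IsRootVector (α + θ) ⁅v, u⁆ := by
  obtain ⟨hα, a, ha, rfl⟩ := hv
  obtain ⟨hθ, c, hc, rfl⟩ := hu
  refine ⟨h, a * c * ctx.C α θ, mul_ne_zero (mul_ne_zero ha hc) (ctx.C_ne_zero α hα θ hθ h), ?_⟩
  rw [smul_lie, lie_smul, ctx.bracket_x α hα θ hθ, if_pos h, add_zero, smul_smul, smul_smul]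

lemma lie_eq_zero (hv : ctx.IsRootVector α v) (hu : ctx.IsRootVector θ u) (h : α + θ ∉ ctx.Δ) :
    ⁅v, u⁆ = 0 := by
  obtain ⟨hα, a, -, rfl⟩ := hv
  obtain ⟨hθ, c, -, rfl⟩ := hu
  rw [smul_lie, lie_smul, ctx.bracket_x α hα θ hθ, if_neg h, smul_zero, smul_zero]

end IsRootVector

lemma add_add_notMem {a b c : Fin ctx.l → ℤ} (ha : a ∈ ctx.Δ) (hb : b ∈ ctx.Δ) (hc : c ∈ ctx.Δ)
    (hab : a + b ∉ ctx.Δ) (hac : a + c ∉ ctx.Δ) (hbc : b + c ∈ ctx.Δ) :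
    a + (b + c) ∉ ctx.Δ := by
  intro h
  have hxa := isRootVector_x ha
  have hxb := isRootVector_x hb
  have hxc := isRootVector_x hc
  apply (hxa.lie (hxb.lie hxc hbc) h).ne_zero
  rw [leibniz_lie, hxa.lie_eq_zero hxb hab, hxa.lie_eq_zero hxc hac, zero_lie, lie_zero, add_zero]

lemma add_single_add_two_single_notMem {ρ : Fin ctx.l → ℤ} {r k : Fin ctx.l} (hρ : ρ ∈ ctx.Δ)
    (hρr : ρ + Pi.single r 1 ∈ ctx.Δ) (hρrk : ρ + Pi.single r 1 + Pi.single k 1 ∈ ctx.Δ)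
    (hρk : ρ + Pi.single k 1 ∉ ctx.Δ) :
    ρ + Pi.single r 1 + Pi.single k 1 + Pi.single k 1 ∉ ctx.Δ := by
  have hk := ctx.simple_mem k
  have hkρ : Pi.single k 1 + ρ ∉ ctx.Δ := by rwa [add_comm]
  by_cases hkr : Pi.single k 1 + Pi.single r 1 ∈ ctx.Δ
  · have hkkr : Pi.single k 1 + (Pi.single k 1 + Pi.single r 1) ∉ ctx.Δ := by
      convert single_add_two_single_notMem (ctx := ctx) r k using 2; abel
    convert add_add_notMem hk hkr hρ hkkr hkρ (by convert hρrk using 1; abel) using 2; abel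
  · exact absurd (by convert hρrk using 1; abel)
      (add_add_notMem hk (ctx.simple_mem r) hρ hkr hkρ (by rwa [add_comm]))

lemma add_single_add_single_add_single_notMem {ρ : Fin ctx.l → ℤ} {k m : Fin ctx.l}
    (hρ : ρ ∈ ctx.Δ) (hρk : ρ + Pi.single k 1 ∈ ctx.Δ) (hkm : Pi.single k 1 + Pi.single m 1 ∈ ctx.Δ)
    (hρkm : ρ + Pi.single k 1 + Pi.single m 1 ∈ ctx.Δ)
    (hρkk : ρ + Pi.single k 1 + Pi.single k 1 ∉ ctx.Δ) (hρm : ρ + Pi.single m 1 ∉ ctx.Δ) :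
    ρ + Pi.single k 1 + Pi.single m 1 + Pi.single k 1 ∉ ctx.Δ := by
  intro hβ
  set xk := ctx.x (Pi.single k 1) 0
  set xm := ctx.x (Pi.single m 1) 0
  set xρ := ctx.x ρ 0
  have hxk := isRootVector_x (ctx.simple_mem k)
  have hxm := isRootVector_x (ctx.simple_mem m)
  have hxρ := isRootVector_x hρ
  have he := hxk.lie hxm hkm
  have hw := he.lie hxρ (by convert hρkm using 1; abel)
  have hv := hxk.lie hw (by convert hβ using 1; abel)
  have hke : ⁅xk, ⁅xk, xm⁆⁆ = 0 :=
    hxk.lie_eq_zero he (by convert single_add_two_single_notMem (ctx := ctx) m k using 2; abel)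
  have hkkρ : ⁅xk, ⁅xk, xρ⁆⁆ = 0 :=
    hxk.lie_eq_zero (hxk.lie hxρ (by rwa [add_comm])) (by convert hρkk using 2; abel)
  have hmρ : ⁅xm, xρ⁆ = 0 := hxm.lie_eq_zero hxρ (by rwa [add_comm])
  -- Expanding `⁅x_k, ⁅x_m, ⁅x_k, x_ρ⁆⁆⁆` by Jacobi in two ways shows that the nonzero vector
  -- `⁅x_k, ⁅⁅x_k, x_m⁆, x_ρ⁆⁆` equals its own negative.
  have hcomm : ⁅xk, ⁅⁅xk, xm⁆, xρ⁆⁆ = ⁅⁅xk, xm⁆, ⁅xk, xρ⁆⁆ := by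
    rw [leibniz_lie, hke, zero_lie, zero_add]
  have hleft : ⁅xk, ⁅xm, ⁅xk, xρ⁆⁆⁆ = ⁅⁅xk, xm⁆, ⁅xk, xρ⁆⁆ := by
    rw [leibniz_lie, hkkρ, lie_zero, add_zero]
  have hright : ⁅xk, ⁅xm, ⁅xk, xρ⁆⁆⁆ = -⁅xk, ⁅⁅xk, xm⁆, xρ⁆⁆ := by
    rw [leibniz_lie xm, hmρ, lie_zero, add_zero, ← lie_skew xm xk, neg_lie, lie_neg]
  have hself : ⁅xk, ⁅⁅xk, xm⁆, xρ⁆⁆ = -⁅xk, ⁅⁅xk, xm⁆, xρ⁆⁆ := by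
    rw [← hright, hleft, hcomm]
  have htwo : (2 : ℂ) • ⁅xk, ⁅⁅xk, xm⁆, xρ⁆⁆ = 0 := by
    rw [two_smul]
    nth_rewrite 1 [hself]
    exact neg_add_cancel _
  exact hv.ne_zero ((smul_eq_zero.1 htwo).resolve_left two_ne_zero)

end Brackets

section NormTwo

lemma pair_le_one_of_normSq_eq_two {δ : Fin ctx.l → ℤ} {k : Fin ctx.l} (hδ : ctx.normSq δ = 2)
    (hne : δ ≠ Pi.single k 1) : ctx.pair k δ ≤ 1 := by
  have := normSq_pos (sub_ne_zero.2 hne)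
  rw [normSq_sub_single, hδ] at this
  omega

lemma neg_one_le_pair_of_normSq_eq_two {δ : Fin ctx.l → ℤ} {k : Fin ctx.l}
    (hδ : ctx.normSq δ = 2) (hne : δ + Pi.single k 1 ≠ 0) : -1 ≤ ctx.pair k δ := by
  have := normSq_pos hne
  rw [normSq_add_single, hδ] at this
  omega

lemma pair_eq_neg_one_of_normSq_eq_two {δ : Fin ctx.l → ℤ} {k : Fin ctx.l}
    (hδ : ctx.normSq δ = 2) (hδk : ctx.normSq (δ + Pi.single k 1) = 2) : ctx.pair k δ = -1 := by
  rw [normSq_add_single, hδ] at hδk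
  omega

variable (ctx) in
def NormTwoUpTo (h : ℤ) : Prop := ∀ β ∈ ctx.Δ, ctx.height β ≤ h → ctx.normSq β = 2

namespace NormTwoUpTo

variable {h : ℤ}

lemma pair_eq_neg_one (hN : ctx.NormTwoUpTo h) {γ : Fin ctx.l → ℤ} {k : Fin ctx.l}
    (hγ : γ ∈ ctx.Δ) (hγk : γ + Pi.single k 1 ∈ ctx.Δ) (hγh : ctx.height γ < h) :
    ctx.pair k γ = -1 :=
  pair_eq_neg_one_of_normSq_eq_two (hN γ hγ hγh.le) (hN _ hγk (by rw [height_add_single]; omega))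

lemma exists_eq_add_single (hN : ctx.NormTwoUpTo h) {δ : Fin ctx.l → ℤ} (hδ : δ ∈ ctx.Δ)
    (hδh : ctx.height δ ≤ h) {k : Fin ctx.l} (hne : δ ≠ Pi.single k 1)
    (hpair : ctx.pair k δ = 1) : ∃ ρ ∈ ctx.Δ, δ = ρ + Pi.single k 1 := by
  induction hδ using root_induction_s8 generalizing k with
  | single j =>
    rw [pair_single] at hpair
    rcases ctx.M_offdiag k j (fun hkj => hne (hkj ▸ rfl)) with h0 | h1 <;> omega
  | add_single δ hδ r hδr ih =>
    have hδh' : ctx.height δ ≤ h := by rw [height_add_single] at hδh; omega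
    rcases eq_or_ne r k with rfl | hrk
    · exact ⟨δ, hδ, rfl⟩
    rw [pair_add, pair_single] at hpair
    rcases ctx.M_offdiag k r hrk.symm with h0 | h1
    · have hne' : δ ≠ Pi.single k 1 := by
        rintro rfl
        rw [pair_single, ctx.M_diag] at hpair
        omega
      obtain ⟨ρ, hρ, rfl⟩ := ih hδh' hne' (by omega)
      have hρr : ρ + Pi.single r 1 ∈ ctx.Δ := by
        by_contra hρr
        have hrk' := single_add_single_notMem_of_M_eq_zero (by rw [ctx.M_symm.apply]; exact h0)
        refine add_add_notMem (ctx.simple_mem r) (ctx.simple_mem k) hρ hrk' (by rwa [add_comm])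
          (by rwa [add_comm]) ?_
        convert hδr using 1; abel
      exact ⟨ρ + Pi.single r 1, hρr, by abel⟩
    · have hδk : δ = Pi.single k 1 := by
        by_contra hδk
        have := pair_le_one_of_normSq_eq_two (hN δ hδ hδh') hδk
        omega
      exact ⟨Pi.single r 1, ctx.simple_mem r, by rw [hδk, add_comm]⟩

lemma add_two_single_notMem (hN : ctx.NormTwoUpTo h) {δ : Fin ctx.l → ℤ} {k : Fin ctx.l}
    (hδ : δ ∈ ctx.Δ) (hδk : δ + Pi.single k 1 ∈ ctx.Δ) (hδh : ctx.height δ < h) :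
    δ + Pi.single k 1 + Pi.single k 1 ∉ ctx.Δ := by
  intro hβ
  rcases eq_single_or_eq_add_single hδ with ⟨j, rfl⟩ | ⟨ρ, hρ, r, rfl⟩
  · exact single_add_two_single_notMem j k hβ
  have hρh : ctx.height ρ < h := by rw [height_add_single] at hδh; omega
  have hkδ := hN.pair_eq_neg_one hδ hδk hδh
  rw [pair_add, pair_single] at hkδ
  rcases eq_or_ne r k with rfl | hrk
  · have := hN.pair_eq_neg_one hρ hδ hρh
    rw [ctx.M_diag] at hkδ
    omega
  by_cases hρk : ρ + Pi.single k 1 ∈ ctx.Δ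
  · have hkρ := hN.pair_eq_neg_one hρ hρk hρh
    have hρkk : ρ + Pi.single k 1 + Pi.single k 1 ∉ ctx.Δ := fun hmem => by
      have := hN.pair_eq_neg_one hρk hmem (by simpa only [height_add_single] using hδh)
      rw [pair_add, pair_single, ctx.M_diag] at this
      omega
    refine add_add_notMem (ctx.simple_mem k) (ctx.simple_mem r) hρk
      (single_add_single_notMem_of_M_eq_zero (by omega)) (by rwa [add_comm]) ?_ ?_
    · convert hδk using 1; abel
    · convert hβ using 1; abel
  · exact add_single_add_two_single_notMem hρ hδ hδk hρk hβ

lemma pair_add_single_eq_neg_one (hN : ctx.NormTwoUpTo h) {δ : Fin ctx.l → ℤ} {m k : Fin ctx.l}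
    (hmk : m ≠ k) (hδ : δ ∈ ctx.Δ) (hγ : δ + Pi.single m 1 ∈ ctx.Δ)
    (hβ : δ + Pi.single m 1 + Pi.single k 1 ∈ ctx.Δ) (hδh : ctx.height δ < h) :
    ctx.pair k (δ + Pi.single m 1) = -1 := by
  have hmδ := hN.pair_eq_neg_one hδ hγ hδh
  have hlow := neg_one_le_pair_of_normSq_eq_two (hN _ hγ (by rw [height_add_single]; omega))
    (ctx.Δ_ne_zero _ hβ)
  have hne : δ ≠ Pi.single k 1 := by
    rintro rfl
    exact single_add_two_single_notMem m k (by convert hβ using 1; abel)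
  have hup := pair_le_one_of_normSq_eq_two (hN δ hδ hδh.le) hne
  rw [pair_add, pair_single] at hlow ⊢
  by_cases hδk : δ + Pi.single k 1 ∈ ctx.Δ
  · have := hN.pair_eq_neg_one hδ hδk hδh
    rcases ctx.M_offdiag k m hmk.symm with hkm | hkm <;> omega
  rcases ctx.M_offdiag k m hmk.symm with hkm | hkm
  · refine absurd ?_ (add_add_notMem (ctx.simple_mem k) (ctx.simple_mem m) hδ
      (single_add_single_notMem_of_M_eq_zero hkm) (by rwa [add_comm]) (by rwa [add_comm]))
    convert hβ using 1; abel
  rcases (by omega : ctx.pair k δ = 0 ∨ ctx.pair k δ = 1) with h0 | h1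
  · omega
  obtain ⟨ρ, hρ, rfl⟩ := hN.exists_eq_add_single hδ hδh.le hne h1
  have hρm : ρ + Pi.single m 1 ∉ ctx.Δ := fun hmem => by
    have := hN.pair_eq_neg_one hρ hmem (by rw [height_add_single] at hδh; omega)
    rw [pair_add, pair_single, ctx.M_symm.apply] at hmδ
    omega
  exact absurd hβ (add_single_add_single_add_single_notMem hρ hδ
    ((ctx.sum_simple_mem_iff k m).2 ⟨hmk.symm, hkm⟩) hγ hδk hρm)

lemma pair_eq_neg_one_of_height_le (hN : ctx.NormTwoUpTo h) {γ : Fin ctx.l → ℤ} {k : Fin ctx.l}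
    (hγ : γ ∈ ctx.Δ) (hγk : γ + Pi.single k 1 ∈ ctx.Δ) (hγh : ctx.height γ ≤ h) :
    ctx.pair k γ = -1 := by
  rcases eq_single_or_eq_add_single hγ with ⟨j, rfl⟩ | ⟨δ, hδ, m, rfl⟩
  · rw [pair_single, ← ctx.M_symm.apply]
    exact ((ctx.sum_simple_mem_iff j k).1 hγk).2
  have hδh : ctx.height δ < h := by rw [height_add_single] at hγh; omega
  rcases eq_or_ne m k with rfl | hmk
  · exact absurd hγk (hN.add_two_single_notMem hδ hγ hδh)
  · exact hN.pair_add_single_eq_neg_one hmk hδ hγ hγk hδh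

lemma succ (hN : ctx.NormTwoUpTo h) : ctx.NormTwoUpTo (h + 1) := by
  intro β hβ hβh
  rcases eq_single_or_eq_add_single hβ with ⟨j, rfl⟩ | ⟨γ, hγ, k, rfl⟩
  · exact normSq_single j
  have hγh : ctx.height γ ≤ h := by rw [height_add_single] at hβh; omega
  rw [normSq_add_single, hN γ hγ hγh, hN.pair_eq_neg_one_of_height_le hγ hβ hγh]
  norm_num

end NormTwoUpTo

lemma normSq_eq_two {β : Fin ctx.l → ℤ} (hβ : β ∈ ctx.Δ) : ctx.normSq β = 2 := by
  have hN : ∀ n : ℕ, ctx.NormTwoUpTo n := by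
    intro n
    induction n with
    | zero => intro β hβ h; push_cast at h; linarith [one_le_height hβ]
    | succ n ih => exact_mod_cast ih.succ
  exact hN _ β hβ (Int.self_le_toNat _)

lemma pair_eq_neg_one_of_add_single_mem {γ : Fin ctx.l → ℤ} {k : Fin ctx.l} (hγ : γ ∈ ctx.Δ)
    (hγk : γ + Pi.single k 1 ∈ ctx.Δ) : ctx.pair k γ = -1 :=
  pair_eq_neg_one_of_normSq_eq_two (normSq_eq_two hγ) (normSq_eq_two hγk)

lemma pair_le_apply {β : Fin ctx.l → ℤ} (hβ : β ∈ ctx.Δ) {i : Fin ctx.l}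
    (hne : β ≠ Pi.single i 1) : ctx.pair i β ≤ β i := by
  rcases (ctx.Δ_nonneg β hβ i).eq_or_lt with h0 | hpos
  · change ∑ j, ctx.M i j * β j ≤ β i
    refine (Finset.sum_nonpos fun j _ => ?_).trans h0.le
    rcases eq_or_ne i j with rfl | hij
    · simp [← h0]
    · rcases ctx.M_offdiag i j hij with h | h <;> simp [h, ctx.Δ_nonneg β hβ j]
  · linarith [pair_le_one_of_normSq_eq_two (normSq_eq_two hβ) hne]

end NormTwo

section Enveloping

attribute [local instance] LieRing.ofAssociativeRing

lemma X_mul_X (α β : Fin ctx.l → ℤ) (m n : ℤ) :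
    ctx.X α m * ctx.X β n = ctx.X β n * ctx.X α m +
      UniversalEnvelopingAlgebra.ι ℂ ⁅ctx.x α m, ctx.x β n⁆ := by
  rw [LieHom.map_lie, Ring.lie_def, X, X, add_sub_cancel]

lemma X_mem_Uplus {α : Fin ctx.l → ℤ} (hα : α ∈ ctx.Δ) {m : ℤ} (hm : 0 ≤ m) :
    ctx.X α m ∈ ctx.Uplus :=
  Submodule.subset_span ⟨α, hα, m, hm, rfl⟩

lemma X_mul_X_mem_Uplus {α β : Fin ctx.l → ℤ} (hα : α ∈ ctx.Δ) (hβ : β ∈ ctx.Δ) {m n : ℤ}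
    (hm : 0 ≤ m) (hmn : α + β ∈ ctx.Δ → 0 ≤ m + n) : ctx.X α m * ctx.X β n ∈ ctx.Uplus := by
  have hβα : ctx.X β n * ctx.X α m ∈ ctx.Uplus := ctx.Uplus.smul_mem _ (X_mem_Uplus hα hm)
  rw [X_mul_X, ctx.bracket_x α hα β hβ]
  split_ifs with h
  · rw [map_smul]
    exact ctx.Uplus.add_mem hβα (ctx.Uplus.smul_of_tower_mem _ (X_mem_Uplus h (hmn h)))
  · rwa [map_zero, add_zero]

lemma R_two (i : Fin ctx.l) :
    ctx.R i 2 = ctx.X (ctx.sroot i) (-1) * ctx.X (ctx.sroot i) (-1) := by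
  rw [R, show (1 - 2 : ℤ) = -1 by norm_num, Finset.Icc_self, Finset.sum_singleton]
  norm_num

lemma X_mul_X_sroot_mem_I0 (i : Fin ctx.l) {β : Fin ctx.l → ℤ} (hβ : β ∈ ctx.Δ) {m : ℤ}
    (hm : 0 ≤ m) :
    ctx.X β (m - (ctx.pair i β - β i)) * ctx.X (ctx.sroot i) (-1) ∈ ctx.I0 := by
  have hi : ctx.sroot i ∈ ctx.Δ := ctx.simple_mem i
  rcases eq_or_ne β (ctx.sroot i) with rfl | hβi
  · simp only [sroot, pair_single, ctx.M_diag, Pi.single_eq_same]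
    rcases hm.eq_or_lt with rfl | hpos
    · refine Submodule.mem_sup_left (Submodule.subset_span ⟨i, 2, le_rfl, ?_⟩)
      rw [R_two]
      norm_num [sroot]
    · exact Submodule.mem_sup_right (X_mul_X_mem_Uplus hi hi (by omega)
        (fun h => absurd h (single_add_single_notMem i)))
  · have hle := pair_le_apply hβ hβi
    refine Submodule.mem_sup_right (X_mul_X_mem_Uplus hβ hi (by omega) fun h => ?_)
    have hpair := pair_eq_neg_one_of_add_single_mem hβ h
    have hβi_nonneg := ctx.Δ_nonneg β hβ i
    omega

end Enveloping

end ADEContext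

/-- For every `i = 1, …, l` and every character `ν : Q → ℂ^×` (determined by its values
`νu j = ν(α_j)`), the map `σ_{ω_i,ν} : a ↦ τ_{ω_i,ν}(a) x_{α_i}(-1)` maps `U(𝔫̄)𝔫̄₊` into
`I_{λ_0}`; in particular, for every positive root `β` and every `m ≥ 0`,
`τ_{ω_i,ν}(x_β(m)) x_{α_i}(-1) ∈ I_{λ_0}`.  Here `τ` is the extension to `U(𝔫̄)` of
`τ_{ω_i,ν}`, acting on generators by `x_α(m) ↦ ν(α) x_α(m - ⟨ω_i, α⟩)`, where
`⟨ω_i, α⟩ = (∑_j m_{ij} α^j) - α^i`. -/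
theorem sigma_omega_maps_Uplus_into_I0 (ctx : ADEContext) (i : Fin ctx.l)
    (νu : Fin ctx.l → ℂˣ) (τ : ctx.U ≃ₐ[ℂ] ctx.U)
    (hτ : ∀ α ∈ ctx.Δ, ∀ m : ℤ,
      τ (ctx.X α m) = ctx.charVal νu α • ctx.X α (m - ((∑ j, ctx.M i j * α j) - α i))) :
    (∀ u ∈ ctx.Uplus, τ u * ctx.X (ctx.sroot i) (-1) ∈ ctx.I0) ∧
    (∀ β ∈ ctx.Δ, ∀ m : ℤ, 0 ≤ m →
      τ (ctx.X β m) * ctx.X (ctx.sroot i) (-1) ∈ ctx.I0) := by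
  have hgen : ∀ β ∈ ctx.Δ, ∀ m : ℤ, 0 ≤ m →
      τ (ctx.X β m) * ctx.X (ctx.sroot i) (-1) ∈ ctx.I0 := by
    intro β hβ m hm
    rw [hτ β hβ m, smul_mul_assoc]
    exact ctx.I0.smul_of_tower_mem _ (ADEContext.X_mul_X_sroot_mem_I0 i hβ hm)
  refine ⟨fun u hu => Submodule.map_mul_mem_of_mem_span τ ?_ hu, hgen⟩
  rintro _ ⟨β, hβ, m, hm, rfl⟩
  exact hgen β hβ m hm
end
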